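/- arXiv:1811.01472 — 2 statements merged into one kernel-verified Lean document; each statement's English description precedes it below -/
import Mathlib

section
/- If a string T is generated by an SLP with n variables, then the number of distinct bigrams occurring in T (i.e., distinct length-2 substrings of T) is at most n. -/
/-- A straight-line program (SLP) over an alphabet `α` with `n` variables `X_1, …, X_n`
(represented by `Fin n`, where index `i : Fin n` stands for `X_{i+1}`).  Each variable
has a righthand side: a pair of symbols, each either a terminal (`Sum.inl a`) or a
variable of strictly smaller index (`Sum.inr j` with `j < i`). -/
structure SLP (α : Type*) where
  /-- the number of variables -/
  n : ℕ
  /-- the righthand sides -/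
  D : Fin n → (α ⊕ Fin n) × (α ⊕ Fin n)
  lt_left : ∀ i j, (D i).1 = Sum.inr j → j < i
  lt_right : ∀ i j, (D i).2 = Sum.inr j → j < i

/-- The expansion `val` of a variable: `val (X_i) = val (D(X_i)[1]) · val (D(X_i)[2])`,
where terminals expand to themselves. -/
def SLP.val {α : Type*} (G : SLP α) (i : Fin G.n) : List α :=
  (match h : (G.D i).1 with
   | Sum.inl a => [a]
   | Sum.inr j => G.val j) ++
  (match h : (G.D i).2 with
   | Sum.inl a => [a]
   | Sum.inr j => G.val j)
termination_by i.val
decreasing_by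
  · exact G.lt_left i j h
  · exact G.lt_right i j h

/-!
Every occurrence of a bigram in `val X_i = val u · val v` (where `D X_i = (u, v)`) lies
inside `val u`, inside `val v`, or across the boundary, where it is the last letter of
`val u` followed by the first letter of `val v`. By induction every bigram of `T` is
therefore the crossing bigram of some variable, and there are at most `n` of those.
-/

namespace List

variable {α : Type*}

def bigrams (L : List α) : Set (α × α) :=
  {p | ∃ i : ℕ, L[i]? = some p.1 ∧ L[i + 1]? = some p.2}

@[simp]
theorem bigrams_singleton (a : α) : [a].bigrams = ∅ := by
  ext p
  simp [bigrams]

theorem bigrams_append_subset {L R : List α} (hL : L ≠ []) (hR : R ≠ []) :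
    (L ++ R).bigrams ⊆ L.bigrams ∪ R.bigrams ∪ {(L.getLast hL, R.head hR)} := by
  rintro p ⟨k, h₁, h₂⟩
  rcases lt_trichotomy (k + 1) L.length with hk | hk | hk
  · rw [getElem?_append_left (by omega)] at h₁ h₂
    exact .inl (.inl ⟨k, h₁, h₂⟩)
  · rw [getElem?_append_left (by omega)] at h₁
    rw [getElem?_append_right (by omega), show k + 1 - L.length = 0 by omega,
      ← head?_eq_getElem?, head?_eq_some_head hR, Option.some_inj] at h₂
    rw [show k = L.length - 1 by omega, ← getLast?_eq_getElem?, getLast?_eq_some_getLast hL,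
      Option.some_inj] at h₁
    exact .inr (Prod.ext h₁.symm h₂.symm)
  · rw [getElem?_append_right (by omega)] at h₁ h₂
    rw [show k + 1 - L.length = k - L.length + 1 by omega] at h₂
    exact .inl (.inr ⟨k - L.length, h₁, h₂⟩)

end List

namespace SLP

variable {α : Type*} (G : SLP α)

def symbolVal : α ⊕ Fin G.n → List α
  | .inl a => [a]
  | .inr j => G.val j

theorem val_eq_append (i : Fin G.n) :
    G.val i = G.symbolVal (G.D i).1 ++ G.symbolVal (G.D i).2 := by
  rw [val]
  congr 1 <;> split <;> simp_all [symbolVal]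

theorem val_ne_nil (i : Fin G.n) : G.val i ≠ [] := by
  induction i using WellFoundedLT.induction with
  | _ i ih =>
    have hleft : G.symbolVal (G.D i).1 ≠ [] := by
      rcases hx : (G.D i).1 with a | j
      · exact List.cons_ne_nil _ _
      · exact ih j (G.lt_left i j hx)
    rw [val_eq_append]
    exact fun h => hleft (List.append_eq_nil_iff.1 h).1

theorem symbolVal_ne_nil : ∀ x : α ⊕ Fin G.n, G.symbolVal x ≠ []
  | .inl _ => List.cons_ne_nil _ _
  | .inr j => G.val_ne_nil j

def crossingBigram (i : Fin G.n) : α × α :=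
  ((G.symbolVal (G.D i).1).getLast (G.symbolVal_ne_nil _),
    (G.symbolVal (G.D i).2).head (G.symbolVal_ne_nil _))

theorem bigrams_val_subset_range (i : Fin G.n) :
    (G.val i).bigrams ⊆ Set.range G.crossingBigram := by
  induction i using WellFoundedLT.induction with
  | _ i ih =>
    have hsymbol : ∀ x : α ⊕ Fin G.n, (∀ j, x = .inr j → j < i) →
        (G.symbolVal x).bigrams ⊆ Set.range G.crossingBigram
      | .inl a, _ => by simp [symbolVal]
      | .inr j, hj => ih j (hj j rfl)
    rw [val_eq_append]
    refine (List.bigrams_append_subset (G.symbolVal_ne_nil _) (G.symbolVal_ne_nil _)).trans ?_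
    refine Set.union_subset (Set.union_subset ?_ ?_) (Set.singleton_subset_iff.2 ⟨i, rfl⟩)
    · exact hsymbol _ (G.lt_left i)
    · exact hsymbol _ (G.lt_right i)

end SLP

/-- if a string `T` is generated by an SLP with `n` variables, then the
number of distinct bigrams occurring in `T` (distinct length-2 substrings of `T`) is at
most `n`. -/
theorem slp_distinct_bigrams_le {α : Type*} (G : SLP α) (hn : 0 < G.n) :
    {p : α × α | ∃ i : ℕ,
        (G.val ⟨G.n - 1, by omega⟩)[i]? = some p.1 ∧
        (G.val ⟨G.n - 1, by omega⟩)[i + 1]? = some p.2}.Finite ∧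
    {p : α × α | ∃ i : ℕ,
        (G.val ⟨G.n - 1, by omega⟩)[i]? = some p.1 ∧
        (G.val ⟨G.n - 1, by omega⟩)[i + 1]? = some p.2}.ncard ≤ G.n := by
  have hsub := G.bigrams_val_subset_range ⟨G.n - 1, by omega⟩
  refine ⟨(Set.finite_range _).subset hsub, ?_⟩
  calc _ ≤ (Set.range G.crossingBigram).ncard := Set.ncard_le_ncard hsub (Set.finite_range _)
    _ ≤ (Set.univ : Set (Fin G.n)).ncard := by
      rw [← Set.image_univ]
      exact Set.ncard_image_le Set.finite_univ
    _ = G.n := by simp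
end

section
/- Consider a context-free grammar over terminals Σ with variables X_1, …, X_n in which each righthand side D(X_i) is a nonempty string over Σ ∪ {X_1, …, X_{i−1}}, with expansion val defined by val(a) = a for a ∈ Σ and val(X_i) equal to the concatenation of the expansions of the symbols of D(X_i), generating T = val(X_n). Its derivation tree is the ordered tree rooted at a node labeled X_n in which every node labeled by a variable X has |D(X)| children labeled in order by the symbols of D(X), and terminal-labeled nodes are leaves. If every variable labels at least one node of the derivation tree, then the total number of terminal occurrences in all righthand sides, Σ_{i=1}^{n} (number of positions of D(X_i) holding a terminal), is at most |T|. -/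
/-- A context-free grammar over terminals `α` with `n` variables `X_1, …, X_n`
(represented by `Fin n`), in which each righthand side `D X_i` is a nonempty string over
the terminals and the variables of strictly smaller index. -/
structure CFGGrammar (α : Type*) where
  /-- the number of variables -/
  n : ℕ
  /-- the righthand sides -/
  D : Fin n → List (α ⊕ Fin n)
  ne : ∀ i, D i ≠ []
  lt : ∀ i j, Sum.inr j ∈ D i → j < i

/-- The expansion of a variable: the concatenation of the expansions of the symbols of
its righthand side, where terminals expand to themselves. -/
def CFGGrammar.val {α : Type*} (G : CFGGrammar α) (i : Fin G.n) : List α :=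
  ((G.D i).attach.map (fun s =>
    match h : s.1 with
    | Sum.inl a => [a]
    | Sum.inr j => G.val j)).flatten
termination_by i.val
decreasing_by exact G.lt i j (h ▸ s.2)

/-- `G.voccBelow X i` is the number of nodes labeled `X` in the subtree of the derivation
tree rooted at a node labeled by the variable `i`; taking `i` to be the start variable,
it is the number of nodes of the derivation tree labeled `X`. -/
def CFGGrammar.voccBelow {α : Type*} (G : CFGGrammar α) (X : Fin G.n) (i : Fin G.n) : ℕ :=
  (if i = X then 1 else 0) +
  ((G.D i).attach.map (fun s =>
    match h : s.1 with
    | Sum.inl _ => 0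
    | Sum.inr j => G.voccBelow X j)).sum
termination_by i.val
decreasing_by exact G.lt i j (h ▸ s.2)

/-! Every terminal occurrence in `D X` produces one letter of `val i` for each node labelled `X`
in the derivation tree below `X_i`, so `|val i| = Σ_X (number of nodes labelled X) · t(X)`,
where `t(X)` counts the terminals of `D X`. When every variable labels a node of the
derivation tree of `X_n`, each coefficient is at least `1`. -/

theorem List.sum_map_finset_sum_comm {ι β M : Type*} [AddCommMonoid M] (s : Finset ι)
    (l : List β) (f : β → ι → M) :
    (l.map fun b => ∑ i ∈ s, f b i).sum = ∑ i ∈ s, (l.map fun b => f b i).sum := by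
  induction l with
  | nil => simp
  | cons b l ih => simp [ih, Finset.sum_add_distrib]

theorem List.sum_map_elim_one_eq_countP_isLeft_add {α β : Type*} (l : List (α ⊕ β))
    (g : β → ℕ) :
    (l.map (Sum.elim (fun _ => 1) g)).sum = l.countP (·.isLeft) + (l.map (Sum.elim 0 g)).sum := by
  induction l with
  | nil => simp
  | cons s l ih => cases s <;> simp [List.countP_cons, ih] <;> omega

namespace CFGGrammar

variable {α : Type*} (G : CFGGrammar α)

def terminalCount (i : Fin G.n) : ℕ := (G.D i).countP (·.isLeft)

theorem val_eq (i : Fin G.n) :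
    G.val i = ((G.D i).map (Sum.elim (fun a => [a]) G.val)).flatten := by
  rw [val]
  congr 1
  conv_rhs => rw [← List.attach_map_subtype_val (G.D i), List.map_map]
  exact List.map_congr_left fun ⟨s, _⟩ _ => by cases s <;> rfl

theorem voccBelow_eq (X i : Fin G.n) : G.voccBelow X i =
    (if i = X then 1 else 0) + ((G.D i).map (Sum.elim 0 (G.voccBelow X))).sum := by
  rw [voccBelow]
  congr 2
  conv_rhs => rw [← List.attach_map_subtype_val (G.D i), List.map_map]
  exact List.map_congr_left fun ⟨s, _⟩ _ => by cases s <;> rfl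

theorem length_val (i : Fin G.n) :
    (G.val i).length = ((G.D i).map (Sum.elim (fun _ => 1) (fun j => (G.val j).length))).sum := by
  rw [val_eq, List.length_flatten, List.map_map]
  congr 1
  exact List.map_congr_left fun s _ => by cases s <;> rfl

theorem length_val_eq_sum_voccBelow_mul_terminalCount (i : Fin G.n) :
    (G.val i).length = ∑ X, G.voccBelow X i * G.terminalCount X := by
  induction i using WellFoundedLT.induction with
  | _ i ih =>
  set weight : Fin G.n → ℕ := fun j => ∑ X, G.voccBelow X j * G.terminalCount X
  have h_children : (G.D i).map (Sum.elim (fun _ => 1) (fun j => (G.val j).length)) =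
      (G.D i).map (Sum.elim (fun _ => 1) weight) :=
    List.map_congr_left fun s hs => by
      cases s with
      | inl => rfl
      | inr j => exact ih j (G.lt i j hs)
  have h_symbol : Sum.elim (0 : α → ℕ) weight =
      fun s => ∑ X, Sum.elim (0 : α → ℕ) (G.voccBelow X) s * G.terminalCount X := by
    funext s
    cases s <;> simp [weight]
  rw [length_val, h_children, List.sum_map_elim_one_eq_countP_isLeft_add, h_symbol,
    List.sum_map_finset_sum_comm]
  simp only [voccBelow_eq, add_mul, Finset.sum_add_distrib, ite_mul, one_mul, zero_mul,
    Finset.sum_ite_eq, Finset.mem_univ, if_true, List.sum_map_mul_right, terminalCount]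

end CFGGrammar

/-- consider a context-free grammar as above, generating
`T = val (X_n)` (start variable of index `G.n - 1`).  If every variable labels at least
one node of the derivation tree, then the total number of terminal occurrences in all
righthand sides, `Σ_i (number of positions of D (X_i) holding a terminal)`, is at most
`|T|`. -/
theorem cfg_terminal_positions_le_length {α : Type*} (G : CFGGrammar α) (hn : 0 < G.n)
    (hall : ∀ X : Fin G.n, 1 ≤ G.voccBelow X ⟨G.n - 1, by omega⟩) :
    (∑ i : Fin G.n, (G.D i).countP (fun s => s.isLeft)) ≤
      (G.val ⟨G.n - 1, by omega⟩).length := by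
  rw [G.length_val_eq_sum_voccBelow_mul_terminalCount]
  exact Finset.sum_le_sum fun X _ => Nat.le_mul_of_pos_left _ (hall X)
end
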